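/- For every natural number n ≥ 1, every associative unital algebra R over the complex numbers (not assumed commutative), and all elements a, b, c of R satisfying 2ab = a² + b² + c² and bc = cb, one has (n+1)·a·bⁿ = a^{n+1} + n·b^{n+1} + ∑_{k=1}^{⌊(n+1)/2⌋} ( u_n^k·a^{n+1−2k} + v_n^k·b^{n+1−2k} )·c^{2k}, where u_n^k = (n+1)·α_n^{n+1−2k} and v_n^k = (n+1)·λ_n^{n+1−2k}, with α_n^j and λ_n^j the coefficients of X^j in A_n(X) and C_n(X) respectively, and where multiplication by the complex scalars u_n^k, v_n^k is via the algebra structure. -/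

import Mathlib

open Polynomial Finset

/-- The pair of polynomial sequences (Aₙ, Cₙ) from the paper:
A₀ = X, C₀ = 0, and
A_{n+1} = ((n+1)/(n+2))·(X·Aₙ + ∑_{k=0}^{n} λₙᵏ·A_k),
C_{n+1} = ((n+1)/(n+2))·((X²+1)·Xⁿ + ∑_{k=0}^{n} λₙᵏ·C_k),
where λₙᵏ is the coefficient of Xᵏ in Cₙ. -/
noncomputable def AC : ℕ → Polynomial ℂ × Polynomial ℂ
  | 0 => (Polynomial.X, 0)
  | (n+1) =>
    (((n+1 : ℂ)/(n+2)) • (Polynomial.X * (AC n).1 +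
        ∑ k ∈ (Finset.range (n+1)).attach, ((AC n).2.coeff k) • (AC k).1),
     ((n+1 : ℂ)/(n+2)) • ((Polynomial.X^2 + 1) * Polynomial.X^n +
        ∑ k ∈ (Finset.range (n+1)).attach, ((AC n).2.coeff k) • (AC k).2))
  decreasing_by
  all_goals first
    | exact Nat.lt_succ_self n
    | exact Nat.lt_succ_of_lt (Finset.mem_range.mp k.2)
    | exact Finset.mem_range.mp k.2

noncomputable def polyA (n : ℕ) : Polynomial ℂ := (AC n).1
noncomputable def polyC (n : ℕ) : Polynomial ℂ := (AC n).2

/-! For a polynomial `P` write `H_N(P; x) = ∑ⱼ pⱼ xʲ c^(N-j)`. By strong induction,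
`a bⁿ = H_{n+1}(Aₙ; a) + H_{n+1}(Cₙ; b)`. Multiplying `2ab = a² + b² + c²` on the right by `bᵐ`
(which commutes with `c²`) gives `2 a b^(m+1) = a (a bᵐ) + b^(m+2) + bᵐ c²`. Expanding `a (a bᵐ)` by
the hypothesis produces the terms `λₘʲ (a bʲ) c^(m+1-j)`; for `j ≤ m` they are expanded once more,
and the term `j = m + 1` is `m/(m+1) · a b^(m+1)`. Since `2 - m/(m+1) = (m+2)/(m+1)`, what is left
is exactly the recursion defining `A_{m+1}` and `C_{m+1}`. The stated form then follows because
`Aₙ` and `Cₙ` only contain the monomials `X^(n+1-2k)`, with leading coefficients `1/(n+1)` and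
`n/(n+1)`. -/
section HomogenizedEval

variable {K R : Type*} [CommSemiring K] [Semiring R] [Algebra K R]

/-- `P ↦ ∑ⱼ pⱼ • xʲ y^(N-j)`; because `N - j` truncates, this is the homogenization of `P` in
degree `N` only when `P.natDegree ≤ N`. -/
noncomputable def homogenizedEval (x y : R) (N : ℕ) : K[X] →ₗ[K] R :=
  lsum fun j => LinearMap.toSpanSingleton K R (x ^ j * y ^ (N - j))

variable (x y : R) (N : ℕ)

theorem homogenizedEval_monomial (k : ℕ) (r : K) :
    homogenizedEval x y N (monomial k r) = r • (x ^ k * y ^ (N - k)) := by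
  simp [homogenizedEval]

theorem homogenizedEval_X_pow (k : ℕ) :
    homogenizedEval x y N (X ^ k : K[X]) = x ^ k * y ^ (N - k) := by
  rw [← monomial_one_right_eq_X_pow, homogenizedEval_monomial, one_smul]

theorem homogenizedEval_X_mul (P : K[X]) :
    homogenizedEval x y (N + 1) (X * P) = x * homogenizedEval x y N P := by
  induction P using Polynomial.induction_on' with
  | add P Q hP hQ => rw [mul_add, map_add, hP, hQ, map_add, mul_add]
  | monomial k r =>
    rw [X_mul_monomial, homogenizedEval_monomial, homogenizedEval_monomial, mul_smul_comm,
      ← mul_assoc, ← pow_succ', Nat.add_sub_add_right]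

theorem homogenizedEval_eq_sum_range {P : K[X]} (hP : P.natDegree ≤ N) :
    homogenizedEval x y N P = ∑ j ∈ range (N + 1), P.coeff j • (x ^ j * y ^ (N - j)) := by
  rw [homogenizedEval, lsum_apply, sum_over_range' _ (fun _ => by simp) _ (Nat.lt_succ_of_le hP)]
  simp

theorem homogenizedEval_mul_pow {P : K[X]} (hP : P.natDegree ≤ N) (k : ℕ) :
    homogenizedEval x y N P * y ^ k = homogenizedEval x y (N + k) P := by
  rw [homogenizedEval_eq_sum_range x y N hP, homogenizedEval_eq_sum_range x y (N + k) (by omega),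
    sum_mul]
  refine (sum_congr rfl fun j hj => ?_).trans
    (sum_subset (range_subset_range.mpr (by omega)) fun j _ hj => ?_)
  · rw [smul_mul_assoc, mul_assoc, ← pow_add, Nat.sub_add_comm (by rw [mem_range] at hj; omega)]
  · rw [coeff_eq_zero_of_natDegree_lt (by rw [mem_range] at hj; omega), zero_smul]

theorem mul_homogenizedEval {P : K[X]} (hP : P.natDegree ≤ N) (z : R) :
    z * homogenizedEval x y N P = ∑ j ∈ range (N + 1), P.coeff j • (z * x ^ j * y ^ (N - j)) := by
  simp only [homogenizedEval_eq_sum_range x y N hP, mul_sum, mul_smul_comm, mul_assoc]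

end HomogenizedEval

theorem sum_range_succ_eq_add_sum_Icc_of_parity {M : Type*} [AddCommMonoid M] (N : ℕ)
    (f : ℕ → M) (hf : ∀ j ≤ N, j % 2 ≠ N % 2 → f j = 0) :
    ∑ j ∈ range (N + 1), f j = f N + ∑ k ∈ Icc 1 (N / 2), f (N - 2 * k) := by
  have hrange : range (N / 2 + 1) = insert 0 (Icc 1 (N / 2)) := by
    ext k; simp only [mem_range, mem_insert, mem_Icc]; omega
  have hinj : Set.InjOn (fun k => N - 2 * k) (range (N / 2 + 1)) := by
    intro k hk l hl hkl; simp only [coe_range, Set.mem_Iio] at hk hl; simp only at hkl; omega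
  calc ∑ j ∈ range (N + 1), f j
      = ∑ j ∈ (range (N / 2 + 1)).image (fun k => N - 2 * k), f j := by
        refine (sum_subset (fun j hj => ?_) fun j hj hj' => hf j ?_ fun hpar => hj' ?_).symm
        · simp only [mem_image, mem_range] at hj ⊢; omega
        · simp only [mem_range] at hj; omega
        · simp only [mem_image, mem_range] at hj ⊢
          exact ⟨(N - j) / 2, by omega, by omega⟩
    _ = f N + ∑ k ∈ Icc 1 (N / 2), f (N - 2 * k) := by
        rw [sum_image hinj, hrange, sum_insert (by simp), Nat.mul_zero, Nat.sub_zero]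

theorem polyA_zero : polyA 0 = X := by rw [polyA, AC]

theorem polyC_zero : polyC 0 = 0 := by rw [polyC, AC]

theorem polyA_succ (n : ℕ) : polyA (n + 1) = ((n + 1 : ℂ) / (n + 2)) •
    (X * polyA n + ∑ k ∈ range (n + 1), (polyC n).coeff k • polyA k) := by
  rw [polyA, AC, ← sum_attach (range (n + 1)) fun k => (polyC n).coeff k • polyA k]
  rfl

theorem polyC_succ (n : ℕ) : polyC (n + 1) = ((n + 1 : ℂ) / (n + 2)) •
    ((X ^ 2 + 1) * X ^ n + ∑ k ∈ range (n + 1), (polyC n).coeff k • polyC k) := by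
  rw [polyC, AC, ← sum_attach (range (n + 1)) fun k => (polyC n).coeff k • polyC k]
  rfl

theorem X_sq_add_one_mul_X_pow {S : Type*} [CommSemiring S] (n : ℕ) :
    (X ^ 2 + 1 : S[X]) * X ^ n = X ^ (n + 2) + X ^ n := by
  ring

theorem coeff_polyA_polyC_eq_zero (n : ℕ) {j : ℕ} (hj : n + 1 < j ∨ j % 2 = n % 2) :
    (polyA n).coeff j = 0 ∧ (polyC n).coeff j = 0 := by
  induction n using Nat.strong_induction_on generalizing j with
  | _ n ih =>
  rcases n with _ | m
  · rw [polyA_zero, polyC_zero, coeff_X, if_neg (by omega), coeff_zero]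
    exact ⟨rfl, rfl⟩
  have hsum : ∀ P : ℕ → ℂ[X], (∀ k ≤ m, (k + 1 < j ∨ j % 2 = k % 2) → (P k).coeff j = 0) →
      (∑ k ∈ range (m + 1), (polyC m).coeff k • P k).coeff j = 0 := by
    intro P hP
    refine (finsetSum_coeff _ _ _).trans (sum_eq_zero fun k hk => ?_)
    rw [mem_range] at hk
    by_cases hkm : m + 1 < k ∨ k % 2 = m % 2
    · rw [coeff_smul, (ih m (by omega) hkm).2, zero_smul]
    · rw [coeff_smul, hP k (by omega) (by omega), smul_zero]
  constructor
  · rw [polyA_succ, coeff_smul, coeff_add, hsum _ fun k hk hkj => (ih k (by omega) hkj).1]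
    rcases j with _ | j
    · simp
    · rw [coeff_X_mul, (ih m (by omega) (by omega)).1, add_zero, smul_zero]
  · rw [polyC_succ, coeff_smul, coeff_add, hsum _ fun k hk hkj => (ih k (by omega) hkj).2,
      X_sq_add_one_mul_X_pow, coeff_add, coeff_X_pow, coeff_X_pow, if_neg (by omega),
      if_neg (by omega), add_zero, add_zero, smul_zero]

theorem natDegree_polyA_le (n : ℕ) : (polyA n).natDegree ≤ n + 1 :=
  natDegree_le_iff_coeff_eq_zero.mpr fun _ hj =>
    (coeff_polyA_polyC_eq_zero n (Or.inl (by exact_mod_cast hj))).1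

theorem natDegree_polyC_le (n : ℕ) : (polyC n).natDegree ≤ n + 1 :=
  natDegree_le_iff_coeff_eq_zero.mpr fun _ hj =>
    (coeff_polyA_polyC_eq_zero n (Or.inl (by exact_mod_cast hj))).2

theorem coeff_sum_smul_eq_zero {P : ℕ → ℂ[X]} (hP : ∀ k, (P k).natDegree ≤ k + 1) (μ : ℕ → ℂ)
    (m : ℕ) : (∑ k ∈ range (m + 1), μ k • P k).coeff (m + 2) = 0 :=
  coeff_eq_zero_of_natDegree_lt <| Nat.lt_succ_of_le <| natDegree_sum_le_of_forall_le _ _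
    fun k hk => (natDegree_smul_le _ _).trans <| (hP k).trans <| by rw [mem_range] at hk; omega

theorem add_one_mul_coeff_polyA (n : ℕ) : (n + 1 : ℂ) * (polyA n).coeff (n + 1) = 1 := by
  induction n with
  | zero => simp [polyA_zero]
  | succ m ih =>
    rw [polyA_succ, coeff_smul, coeff_add, coeff_X_mul, coeff_sum_smul_eq_zero natDegree_polyA_le,
      add_zero, smul_eq_mul]
    have hm : (m + 2 : ℂ) ≠ 0 := by exact_mod_cast Nat.succ_ne_zero (m + 1)
    push_cast
    field_simp
    linear_combination (m + 2 : ℂ) * ih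

theorem add_one_mul_coeff_polyC (n : ℕ) : (n + 1 : ℂ) * (polyC n).coeff (n + 1) = n := by
  rcases n with _ | m
  · simp [polyC_zero]
  rw [polyC_succ, coeff_smul, coeff_add, coeff_sum_smul_eq_zero natDegree_polyC_le,
    X_sq_add_one_mul_X_pow, coeff_add, coeff_X_pow_self, coeff_X_pow, if_neg (by omega),
    smul_eq_mul]
  have hm : (m + 2 : ℂ) ≠ 0 := by exact_mod_cast Nat.succ_ne_zero (m + 1)
  push_cast
  field_simp
  ring

section Identity

variable {R : Type*} [Ring R] [Algebra ℂ R] {a b c : R}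

theorem two_mul_mul_pow_succ (h : 2 * (a * b) = a ^ 2 + b ^ 2 + c ^ 2) (hbc : b * c = c * b)
    (m : ℕ) : 2 * (a * b ^ (m + 1)) =
      a * (a * b ^ m) + homogenizedEval b c (m + 2) ((X ^ 2 + 1) * X ^ m : ℂ[X]) := by
  have hcb : c ^ 2 * b ^ m = b ^ m * c ^ 2 := ((Commute.symm hbc).pow_pow 2 m).eq
  rw [X_sq_add_one_mul_X_pow, map_add, homogenizedEval_X_pow, homogenizedEval_X_pow, Nat.sub_self,
    pow_zero, mul_one, show m + 2 - m = 2 by omega]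
  calc 2 * (a * b ^ (m + 1)) = (a ^ 2 + b ^ 2 + c ^ 2) * b ^ m := by
        rw [← h, pow_succ', mul_assoc, mul_assoc]
    _ = a * (a * b ^ m) + (b ^ (m + 2) + b ^ m * c ^ 2) := by
        rw [add_mul, add_mul, hcb, sq, mul_assoc, ← pow_add, add_comm 2 m, add_assoc]

theorem mul_homogenizedEval_polyC {m : ℕ} (ih : ∀ j ≤ m, a * b ^ j =
      homogenizedEval a c (j + 1) (polyA j) + homogenizedEval b c (j + 1) (polyC j)) :
    a * homogenizedEval b c (m + 1) (polyC m) = (polyC m).coeff (m + 1) • (a * b ^ (m + 1)) +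
      (homogenizedEval a c (m + 2) (∑ k ∈ range (m + 1), (polyC m).coeff k • polyA k) +
        homogenizedEval b c (m + 2) (∑ k ∈ range (m + 1), (polyC m).coeff k • polyC k)) := by
  rw [mul_homogenizedEval _ _ _ (natDegree_polyC_le m), sum_range_succ, Nat.sub_self, pow_zero,
    mul_one, map_sum, map_sum, ← sum_add_distrib, add_comm]
  congr 1
  refine sum_congr rfl fun j hj => ?_
  have hjm : j ≤ m := Nat.lt_succ_iff.mp (mem_range.mp hj)
  rw [map_smul, map_smul, ← smul_add, mul_assoc, ← mul_assoc a, ih j hjm, add_mul,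
    homogenizedEval_mul_pow _ _ _ (natDegree_polyA_le j),
    homogenizedEval_mul_pow _ _ _ (natDegree_polyC_le j), show j + 1 + (m + 1 - j) = m + 2 by omega]

theorem mul_pow_eq_homogenizedEval (h : 2 * (a * b) = a ^ 2 + b ^ 2 + c ^ 2) (hbc : b * c = c * b)
    (n : ℕ) : a * b ^ n =
      homogenizedEval a c (n + 1) (polyA n) + homogenizedEval b c (n + 1) (polyC n) := by
  induction n using Nat.strong_induction_on with
  | _ n ih =>
  rcases n with _ | m
  · rw [polyA_zero, polyC_zero, map_zero, add_zero, ← pow_one (X : ℂ[X]), homogenizedEval_X_pow]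
    simp
  have key : (2 - (polyC m).coeff (m + 1)) • (a * b ^ (m + 1)) =
      homogenizedEval a c (m + 2) (X * polyA m + ∑ k ∈ range (m + 1), (polyC m).coeff k • polyA k) +
      homogenizedEval b c (m + 2)
        ((X ^ 2 + 1) * X ^ m + ∑ k ∈ range (m + 1), (polyC m).coeff k • polyC k) := by
    rw [sub_smul, two_smul, ← two_mul, two_mul_mul_pow_succ h hbc, ih m m.lt_succ_self, mul_add,
      mul_homogenizedEval_polyC fun j hj => ih j (Nat.lt_succ_of_le hj), map_add, map_add,
      homogenizedEval_X_mul]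
    abel
  have hscalar : ((m + 1 : ℂ) / (m + 2)) * (2 - (polyC m).coeff (m + 1)) = 1 := by
    have hm : (m + 2 : ℂ) ≠ 0 := by exact_mod_cast Nat.succ_ne_zero (m + 1)
    field_simp
    linear_combination -add_one_mul_coeff_polyC m
  show a * b ^ (m + 1) = homogenizedEval a c (m + 2) _ + homogenizedEval b c (m + 2) _
  rw [polyA_succ, polyC_succ, map_smul, map_smul, ← smul_add, ← key, smul_smul, hscalar, one_smul]

end Identity

theorem stmt19_general (n : ℕ) (R : Type*) [Ring R] [Algebra ℂ R] (a b c : R)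
    (h : 2 * (a * b) = a ^ 2 + b ^ 2 + c ^ 2) (hbc : b * c = c * b) :
    ((n + 1 : ℂ)) • (a * b ^ n) =
      a ^ (n + 1) + (n : ℂ) • b ^ (n + 1) +
        ∑ k ∈ Finset.Icc 1 ((n + 1) / 2),
          (((n + 1 : ℂ) * (polyA n).coeff (n + 1 - 2 * k)) • a ^ (n + 1 - 2 * k) +
            ((n + 1 : ℂ) * (polyC n).coeff (n + 1 - 2 * k)) • b ^ (n + 1 - 2 * k)) *
            c ^ (2 * k) := by
  rw [mul_pow_eq_homogenizedEval h hbc n, homogenizedEval_eq_sum_range _ _ _ (natDegree_polyA_le n),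
    homogenizedEval_eq_sum_range _ _ _ (natDegree_polyC_le n), ← sum_add_distrib, smul_sum,
    sum_range_succ_eq_add_sum_Icc_of_parity (n + 1) _ fun j _ hj => ?_]
  · congr 1
    · rw [Nat.sub_self, pow_zero, mul_one, mul_one, smul_add, smul_smul, smul_smul,
        add_one_mul_coeff_polyA, add_one_mul_coeff_polyC, one_smul]
    · refine sum_congr rfl fun k hk => ?_
      rw [show n + 1 - (n + 1 - 2 * k) = 2 * k by simp only [mem_Icc] at hk; omega, smul_add,
        smul_smul, smul_smul, ← smul_mul_assoc, ← smul_mul_assoc, ← add_mul]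
  · obtain ⟨hA, hC⟩ := coeff_polyA_polyC_eq_zero n (j := j) (Or.inr (by omega))
    rw [hA, hC, zero_smul, zero_smul, add_zero, smul_zero]

theorem stmt19 (n : ℕ) (hn : 1 ≤ n) (R : Type*) [Ring R] [Algebra ℂ R] (a b c : R)
    (h : 2 * (a * b) = a ^ 2 + b ^ 2 + c ^ 2) (hbc : b * c = c * b) :
    ((n + 1 : ℂ)) • (a * b ^ n) =
      a ^ (n + 1) + (n : ℂ) • b ^ (n + 1) +
        ∑ k ∈ Finset.Icc 1 ((n + 1) / 2),
          (((n + 1 : ℂ) * (polyA n).coeff (n + 1 - 2 * k)) • a ^ (n + 1 - 2 * k) +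
            ((n + 1 : ℂ) * (polyC n).coeff (n + 1 - 2 * k)) • b ^ (n + 1 - 2 * k)) *
            c ^ (2 * k) :=
  stmt19_general n R a b c h hbc
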